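/- Let T be a trigonometric polynomial of degree at most n, i.e., T(t) = a₀ + Σ_{j=1}^n (a_j cos(jt) + b_j sin(jt)) with real coefficients, and let k ≥ 1. Then for every θ ∈ ℝ, |T^{(k)}(θ)| ≤ n^k · sup_{t∈ℝ} |T(t)|. -/

import Mathlib

/-!
M. Riesz's interpolation formula: for a trigonometric polynomial `T` of degree at most `n`,
`T' x = ∑_{j < 2n} c_j T (x + t_j)` with nodes `t_j = (2j+1)π/(2n)` and weights
`c_j = (-1)^j / (4n sin²(t_j/2))`, whose absolute values sum to `n`. Hence `|T'| ≤ n ‖T‖`, and as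
`T'` is again a trigonometric polynomial of degree at most `n`, induction gives `|T⁽ᵏ⁾| ≤ nᵏ ‖T‖`.

By linearity the formula only has to be checked on `e^{imt}`, `m ≤ n`, where it reads
`∑_j c_j w_j^m = i m` for the `2n`-th roots `w_j = e^{i t_j}` of `-1`. Expanding `1/(w-1)²` in
powers of `w` (using `w^{2n} = -1`) turns `c_j` into a combination of powers of `w_j`, and the
identity reduces to power sums over roots of unity, of which only one survives.
-/

open Real Finset
open Complex (I)

theorem IsPrimitiveRoot.sum_pow_pow_eq_zero {R : Type*} [CommRing R] [IsDomain R] {ω : R}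
    {N s : ℕ} (hω : IsPrimitiveRoot ω N) (hs : ¬ N ∣ s) :
    ∑ j ∈ range N, (ω ^ j) ^ s = 0 := by
  have hne : 1 - ω ^ s ≠ 0 := sub_ne_zero.mpr fun h => hs (hω.pow_eq_one_iff_dvd s |>.mp h.symm)
  refine eq_zero_of_ne_zero_of_mul_left_eq_zero hne ?_
  simp_rw [← pow_mul, mul_comm _ s, pow_mul]
  rw [mul_neg_geom_sum, ← pow_mul, mul_comm, pow_mul, hω.pow_eq_one, one_pow, sub_self]

theorem sub_one_sq_mul_sum_range_mul_pow {R : Type*} [CommRing R] (w : R) (N : ℕ) :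
    (w - 1) ^ 2 * ∑ p ∈ range N, (p : R) * w ^ p = (N - 1) * w ^ (N + 1) - N * w ^ N + w := by
  induction N with
  | zero => simp
  | succ N ih =>
    rw [sum_range_succ, mul_add, ih]
    push_cast
    ring

theorem sub_one_sq_mul_sum_range_sub_mul_pow {R : Type*} [CommRing R] {w : R} {n : ℕ}
    (hw : w ^ (2 * n) = -1) :
    (w - 1) ^ 2 * ∑ p ∈ range (2 * n), ((p : R) - n) * w ^ p = 2 * w := by
  have hgeom := geom_sum_mul w (2 * n)
  simp_rw [sub_mul, sum_sub_distrib, mul_sub, sub_one_sq_mul_sum_range_mul_pow, ← mul_sum,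
    pow_succ, hw]
  push_cast
  linear_combination (-(n : R) * (w - 1)) * hgeom + ((n : R) - n * w) * hw

theorem Complex.four_mul_sin_half_sq (t : ℂ) :
    4 * Complex.sin (t / 2) ^ 2 = -(Complex.exp (t * I) - 1) ^ 2 / Complex.exp (t * I) := by
  obtain ⟨u, hu_def⟩ : ∃ u, u = Complex.exp (t / 2 * I) := ⟨_, rfl⟩
  have hu : Complex.exp (t * I) = u ^ 2 := by rw [hu_def, ← Complex.exp_nat_mul]; ring_nf
  have hsin : Complex.sin (t / 2) = (u⁻¹ - u) * I / 2 := by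
    rw [Complex.sin, hu_def, ← Complex.exp_neg, neg_mul]
  have hu0 : u ≠ 0 := hu_def ▸ Complex.exp_ne_zero _
  rw [hsin, hu, div_pow, mul_pow, Complex.I_sq]
  field_simp
  ring

noncomputable def trigPoly (n : ℕ) (a b : ℕ → ℝ) (t : ℝ) : ℝ :=
  a 0 + ∑ j ∈ Icc 1 n, (a j * cos (j * t) + b j * sin (j * t))

theorem hasDerivAt_trigPoly (n : ℕ) (a b : ℕ → ℝ) (x : ℝ) :
    HasDerivAt (trigPoly n a b) (trigPoly n (fun m => m * b m) (fun m => -(m * a m)) x) x := by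
  have h : HasDerivAt (trigPoly n a b) (0 + ∑ j ∈ Icc 1 n,
      (a j * (-sin (j * x) * j) + b j * (cos (j * x) * j))) x := by
    refine (hasDerivAt_const x (a 0)).add (HasDerivAt.fun_sum fun j _ => ?_)
    exact (((hasDerivAt_id x).const_mul (j : ℝ)).cos.const_mul _).add
      (((hasDerivAt_id x).const_mul (j : ℝ)).sin.const_mul _) |>.congr_deriv (by simp)
  convert h using 1
  simp only [trigPoly, CharP.cast_eq_zero, zero_mul]
  congr 1
  exact sum_congr rfl fun j _ => by ring

theorem deriv_trigPoly (n : ℕ) (a b : ℕ → ℝ) :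
    deriv (trigPoly n a b) = trigPoly n (fun m => m * b m) (fun m => -(m * a m)) :=
  funext fun x => (hasDerivAt_trigPoly n a b x).deriv

theorem abs_trigPoly_le (n : ℕ) (a b : ℕ → ℝ) (t : ℝ) :
    |trigPoly n a b t| ≤ |a 0| + ∑ j ∈ Icc 1 n, (|a j| + |b j|) := by
  refine (abs_add_le _ _).trans (add_le_add le_rfl ((abs_sum_le_sum_abs _ _).trans
    (sum_le_sum fun j _ => (abs_add_le _ _).trans ?_)))
  rw [abs_mul, abs_mul]
  exact add_le_add (mul_le_of_le_one_right (abs_nonneg _) (abs_cos_le_one _))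
    (mul_le_of_le_one_right (abs_nonneg _) (abs_sin_le_one _))

theorem bddAbove_range_abs_trigPoly (n : ℕ) (a b : ℕ → ℝ) :
    BddAbove (Set.range fun t => |trigPoly n a b t|) :=
  ⟨_, Set.forall_mem_range.mpr (abs_trigPoly_le n a b)⟩

noncomputable def rieszNode (n j : ℕ) : ℝ := (2 * j + 1) * π / (2 * n)

noncomputable def rieszPoint (n j : ℕ) : ℂ := Complex.exp (rieszNode n j * I)

noncomputable def rieszCoeff (n j : ℕ) : ℝ := (-1) ^ j / (4 * n * sin (rieszNode n j / 2) ^ 2)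

section RieszWeights

variable {n j : ℕ}

theorem rieszPoint_pow (m : ℕ) : rieszPoint n j ^ m = Complex.exp (↑(m * rieszNode n j) * I) := by
  rw [rieszPoint, ← Complex.exp_nat_mul]
  push_cast
  ring_nf

theorem rieszPoint_eq_mul_pow (hn : n ≠ 0) :
    rieszPoint n j = Complex.exp (π * I / (2 * n)) * Complex.exp (2 * π * I / ↑(2 * n)) ^ j := by
  rw [rieszPoint, ← Complex.exp_nat_mul, ← Complex.exp_add, rieszNode]
  congr 1
  push_cast
  field_simp
  ring

theorem rieszPoint_pow_self (hn : n ≠ 0) : rieszPoint n j ^ n = I * (-1) ^ j := by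
  have hn' : (n : ℂ) ≠ 0 := by exact_mod_cast hn
  have hζ : Complex.exp (π * I / (2 * n)) ^ n = I := by
    rw [← Complex.exp_nat_mul, show (n : ℂ) * (π * I / (2 * n)) = π / 2 * I by field_simp,
      Complex.exp_pi_div_two_mul_I]
  have hω : Complex.exp (2 * π * I / ↑(2 * n)) ^ n = -1 := by
    rw [← Complex.exp_nat_mul,
      show (n : ℂ) * (2 * π * I / ↑(2 * n)) = π * I by push_cast; field_simp, Complex.exp_pi_mul_I]
  rw [rieszPoint_eq_mul_pow hn, mul_pow, hζ, ← pow_mul, mul_comm j, pow_mul, hω]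

theorem rieszPoint_pow_two_mul (hn : n ≠ 0) : rieszPoint n j ^ (2 * n) = -1 := by
  rw [mul_comm, pow_mul, rieszPoint_pow_self hn, mul_pow, Complex.I_sq, ← pow_mul,
    mul_comm j, pow_mul, neg_one_sq, one_pow, neg_one_mul]

theorem sum_rieszPoint_pow_eq_zero {s : ℕ} (hs : ¬ 2 * n ∣ s) :
    ∑ j ∈ range (2 * n), rieszPoint n j ^ s = 0 := by
  rcases eq_or_ne n 0 with rfl | hn
  · simp
  have hω := Complex.isPrimitiveRoot_exp (2 * n) (by omega)
  simp_rw [rieszPoint_eq_mul_pow hn, mul_pow, ← mul_sum, hω.sum_pow_pow_eq_zero hs, mul_zero]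

theorem sin_rieszNode_half_pos (hj : j < 2 * n) : 0 < sin (rieszNode n j / 2) := by
  have hn : (0 : ℝ) < n := by exact_mod_cast (show 0 < n by omega)
  have hj' : (j : ℝ) + 1 ≤ 2 * n := by exact_mod_cast hj
  apply sin_pos_of_pos_of_lt_pi
  · unfold rieszNode; positivity
  · rw [rieszNode, div_div, div_lt_iff₀ (by positivity)]
    nlinarith [pi_pos]

theorem rieszCoeff_eq_sum (hj : j < 2 * n) :
    (rieszCoeff n j : ℂ) =
      I / (2 * n) * ∑ p ∈ range (2 * n), ((p : ℂ) - n) * rieszPoint n j ^ (n + p) := by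
  have hn : n ≠ 0 := by omega
  have hn' : (n : ℂ) ≠ 0 := by exact_mod_cast hn
  have h2n := rieszPoint_pow_two_mul (j := j) hn
  have hpow := rieszPoint_pow_self (j := j) hn
  have hsin : 4 * Complex.sin (rieszNode n j / 2) ^ 2 =
      -(rieszPoint n j - 1) ^ 2 / rieszPoint n j :=
    Complex.four_mul_sin_half_sq _
  have hw0 : rieszPoint n j ≠ 0 := Complex.exp_ne_zero _
  rw [rieszCoeff]
  push_cast
  generalize rieszPoint n j = w at *
  have hw1 : w - 1 ≠ 0 := by
    rintro h
    rw [sub_eq_zero.mp h, one_pow] at h2n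
    norm_num at h2n
  have hsum : ∑ p ∈ range (2 * n), ((p : ℂ) - n) * w ^ (n + p) = w ^ n * (2 * w / (w - 1) ^ 2) := by
    rw [← mul_div_assoc, eq_div_iff (pow_ne_zero 2 hw1), ← sub_one_sq_mul_sum_range_sub_mul_pow h2n]
    simp only [sum_mul, mul_sum]
    refine sum_congr rfl fun p _ => ?_
    ring
  have hsign : (-1 : ℂ) ^ j = -I * w ^ n := by
    rw [hpow, ← mul_assoc, neg_mul, Complex.I_mul_I, neg_neg, one_mul]
  -- both sides equal `i w^{n+1} / (n (w - 1)²)`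
  rw [hsum, hsign, mul_right_comm (4 : ℂ), hsin]
  field_simp

theorem sum_rieszCoeff_mul_rieszPoint_pow {m : ℕ} (hm : m ≤ n) :
    ∑ j ∈ range (2 * n), (rieszCoeff n j : ℂ) * rieszPoint n j ^ m = I * m := by
  rcases eq_or_ne n 0 with rfl | hn
  · simp [Nat.le_zero.mp hm]
  have hn' : (n : ℂ) ≠ 0 := by exact_mod_cast hn
  -- the exponents `n + p + m` lie in `[n, 4n)`, where `2n` is the only multiple of `2n`
  have hexp : ∀ p ∈ range (2 * n), p ≠ n - m →
      ∑ j ∈ range (2 * n), rieszPoint n j ^ (n + p + m) = 0 := fun p hp hpm =>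
    sum_rieszPoint_pow_eq_zero fun ⟨q, hq⟩ => by
      rw [mem_range] at hp
      have hq2 : q < 2 := by
        by_contra! h
        have := Nat.mul_le_mul_left (2 * n) h
        omega
      interval_cases q <;> omega
  calc ∑ j ∈ range (2 * n), (rieszCoeff n j : ℂ) * rieszPoint n j ^ m
      = I / (2 * n) * ∑ p ∈ range (2 * n), ((p : ℂ) - n) *
          ∑ j ∈ range (2 * n), rieszPoint n j ^ (n + p + m) := by
        rw [sum_congr rfl fun j hj => by rw [rieszCoeff_eq_sum (mem_range.mp hj)]]
        simp_rw [mul_sum, sum_mul]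
        rw [sum_comm]
        refine sum_congr rfl fun p _ => sum_congr rfl fun j _ => ?_
        ring
    _ = I / (2 * n) * (((n - m : ℕ) : ℂ) - n) * ∑ j ∈ range (2 * n), rieszPoint n j ^ (2 * n) := by
        rw [sum_eq_single_of_mem (n - m) (mem_range.mpr (by omega))
          fun p hp hpm => by rw [hexp p hp hpm, mul_zero],
          mul_assoc, show n + (n - m) + m = 2 * n by omega]
    _ = I * m := by
        simp_rw [rieszPoint_pow_two_mul hn, sum_const, card_range]
        push_cast [Nat.cast_sub hm]
        field_simp
        ring

theorem sum_rieszCoeff_mul_cos {m : ℕ} (hm : m ≤ n) :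
    ∑ j ∈ range (2 * n), rieszCoeff n j * cos (m * rieszNode n j) = 0 := by
  have h := congrArg Complex.re (sum_rieszCoeff_mul_rieszPoint_pow hm)
  simp only [rieszPoint_pow, Complex.re_sum, Complex.re_ofReal_mul,
    Complex.exp_ofReal_mul_I_re] at h
  simpa using h

theorem sum_rieszCoeff_mul_sin {m : ℕ} (hm : m ≤ n) :
    ∑ j ∈ range (2 * n), rieszCoeff n j * sin (m * rieszNode n j) = m := by
  have h := congrArg Complex.im (sum_rieszCoeff_mul_rieszPoint_pow hm)
  simp only [rieszPoint_pow, Complex.im_sum, Complex.im_ofReal_mul,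
    Complex.exp_ofReal_mul_I_im] at h
  simpa using h

theorem sin_mul_rieszNode_self (hn : n ≠ 0) : sin (n * rieszNode n j) = (-1) ^ j := by
  have h := congrArg Complex.im (rieszPoint_pow_self (j := j) hn)
  rw [rieszPoint_pow, Complex.exp_ofReal_mul_I_im] at h
  rw [h, Complex.I_mul_im]
  norm_cast

theorem sum_abs_rieszCoeff : ∑ j ∈ range (2 * n), |rieszCoeff n j| = n := by
  rcases eq_or_ne n 0 with rfl | hn
  · simp
  rw [← sum_rieszCoeff_mul_sin le_rfl]
  refine sum_congr rfl fun j hj => ?_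
  have hpos : 0 < 4 * n * sin (rieszNode n j / 2) ^ 2 := by
    have := sin_rieszNode_half_pos (mem_range.mp hj)
    positivity
  rw [sin_mul_rieszNode_self hn, rieszCoeff, abs_div, abs_of_pos hpos, abs_pow, abs_neg, abs_one,
    div_mul_eq_mul_div, ← pow_two, ← pow_mul, pow_mul', neg_one_sq, one_pow]

theorem sum_rieszCoeff_mul_cos_add {m : ℕ} (hm : m ≤ n) (x : ℝ) :
    ∑ j ∈ range (2 * n), rieszCoeff n j * cos (m * (x + rieszNode n j)) = -(m * sin (m * x)) := by
  simp only [mul_add, cos_add, mul_sub, sum_sub_distrib, mul_left_comm (rieszCoeff n _), ← mul_sum,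
    sum_rieszCoeff_mul_cos hm, sum_rieszCoeff_mul_sin hm]
  ring

theorem sum_rieszCoeff_mul_sin_add {m : ℕ} (hm : m ≤ n) (x : ℝ) :
    ∑ j ∈ range (2 * n), rieszCoeff n j * sin (m * (x + rieszNode n j)) = m * cos (m * x) := by
  simp only [mul_add, sin_add, sum_add_distrib, mul_left_comm (rieszCoeff n _), ← mul_sum,
    sum_rieszCoeff_mul_cos hm, sum_rieszCoeff_mul_sin hm]
  ring

end RieszWeights

theorem deriv_trigPoly_eq_sum_rieszCoeff (n : ℕ) (a b : ℕ → ℝ) (x : ℝ) :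
    deriv (trigPoly n a b) x =
      ∑ j ∈ range (2 * n), rieszCoeff n j * trigPoly n a b (x + rieszNode n j) := by
  have hsum : ∑ j ∈ range (2 * n), rieszCoeff n j = 0 := by
    simpa using sum_rieszCoeff_mul_cos (n := n) (Nat.zero_le _)
  have harm : ∀ m ∈ Icc 1 n, ∑ j ∈ range (2 * n), rieszCoeff n j *
      (a m * cos (m * (x + rieszNode n j)) + b m * sin (m * (x + rieszNode n j))) =
      m * b m * cos (m * x) + -(m * a m) * sin (m * x) := fun m hm => by
    simp only [mul_add (rieszCoeff n _), sum_add_distrib, mul_left_comm (rieszCoeff n _), ← mul_sum,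
      sum_rieszCoeff_mul_cos_add (mem_Icc.mp hm).2, sum_rieszCoeff_mul_sin_add (mem_Icc.mp hm).2]
    ring
  rw [deriv_trigPoly]
  simp only [trigPoly]
  rw [sum_congr rfl fun j _ => mul_add (rieszCoeff n j) _ _, sum_add_distrib (s := range _),
    ← sum_mul, hsum]
  simp_rw [mul_sum]
  rw [sum_comm, sum_congr rfl harm, Nat.cast_zero, zero_mul, zero_mul]

theorem abs_deriv_trigPoly_le (n : ℕ) (a b : ℕ → ℝ) (x : ℝ) :
    |deriv (trigPoly n a b) x| ≤ n * ⨆ t, |trigPoly n a b t| := by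
  rw [deriv_trigPoly_eq_sum_rieszCoeff n, ← sum_abs_rieszCoeff, sum_mul]
  refine (abs_sum_le_sum_abs _ _).trans (sum_le_sum fun j _ => ?_)
  rw [abs_mul]
  exact mul_le_mul_of_nonneg_left (le_ciSup (bddAbove_range_abs_trigPoly n a b) _) (abs_nonneg _)

theorem abs_iteratedDeriv_trigPoly_le (n k : ℕ) (a b : ℕ → ℝ) (x : ℝ) :
    |iteratedDeriv k (trigPoly n a b) x| ≤ n ^ k * ⨆ t, |trigPoly n a b t| := by
  induction k generalizing a b with
  | zero => simpa using le_ciSup (bddAbove_range_abs_trigPoly n a b) x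
  | succ k ih =>
    have hderiv : ⨆ t, |deriv (trigPoly n a b) t| ≤ n * ⨆ t, |trigPoly n a b t| :=
      ciSup_le (abs_deriv_trigPoly_le n a b)
    rw [iteratedDeriv_succ', pow_succ, mul_assoc, deriv_trigPoly]
    refine (ih _ _).trans ?_
    rw [← deriv_trigPoly]
    exact mul_le_mul_of_nonneg_left hderiv (by positivity)

theorem bernstein_trig_higher_derivative_general (n k : ℕ) (a b : ℕ → ℝ) (T : ℝ → ℝ)
    (hT : ∀ t : ℝ, T t =
      a 0 + ∑ j ∈ Finset.Icc 1 n, (a j * Real.cos (j * t) + b j * Real.sin (j * t)))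
    (θ : ℝ) :
    |iteratedDeriv k T θ| ≤ (n : ℝ) ^ k * ⨆ t : ℝ, |T t| := by
  obtain rfl : T = trigPoly n a b := funext hT
  exact abs_iteratedDeriv_trigPoly_le n k a b θ

/-- Bernstein's inequality for higher derivatives of trigonometric polynomials:
if `T(t) = a₀ + ∑_{j=1}^n (aⱼ cos(jt) + bⱼ sin(jt))` and `k ≥ 1`, then for every `θ`,
`|T⁽ᵏ⁾(θ)| ≤ nᵏ · sup_t |T(t)|`. -/
theorem bernstein_trig_higher_derivative (n k : ℕ) (hk : 1 ≤ k) (a b : ℕ → ℝ) (T : ℝ → ℝ)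
    (hT : ∀ t : ℝ, T t =
      a 0 + ∑ j ∈ Finset.Icc 1 n, (a j * Real.cos (j * t) + b j * Real.sin (j * t)))
    (θ : ℝ) :
    |iteratedDeriv k T θ| ≤ (n : ℝ) ^ k * ⨆ t : ℝ, |T t| :=
  bernstein_trig_higher_derivative_general n k a b T hT θ
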